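/- arXiv:2210.00915 — 3 statements merged into one kernel-verified Lean document; each statement's English description precedes it below -/
import Mathlib

section
/- Every 3-periodic function f : ℝ → ℝ can be written uniquely as f = g + h, where g is 1-periodic and h satisfies h(x+2) + h(x+1) + h(x) = 0 for all x; explicitly g(x) = (f(x) + f(x+1) + f(x+2))/3 and h(x) = f(x) - g(x). -/
/-! The map `S h x = h (x + 2) + h (x + 1) + h x` is additive, multiplies a 1-periodic function by
three and kills the second summand of the decomposition. Hence `S f = 3 g` for every decomposition
`f = g + h`, which forces `g = S f / 3`. Conversely, if `f` is 3-periodic then `S f` is 1-periodic,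
since `x ↦ x + 1` permutes its three summands cyclically, so `f - S f / 3` lies in the kernel of `S`. -/

open Function

section ShiftSum

variable {α : Type*} [AddMonoidWithOne α]

def shiftSum {M : Type*} [Add M] (f : α → M) (x : α) : M := f (x + 2) + f (x + 1) + f x

theorem shiftSum_add {M : Type*} [AddCommMonoid M] (f g : α → M) :
    shiftSum (f + g) = shiftSum f + shiftSum g := by
  funext x
  simp only [shiftSum, Pi.add_apply]
  abel

theorem shiftSum_sub {M : Type*} [AddCommGroup M] (f g : α → M) :
    shiftSum (f - g) = shiftSum f - shiftSum g := by
  funext x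
  simp only [shiftSum, Pi.sub_apply]
  abel

theorem Function.Periodic.shiftSum_eq_nsmul {M : Type*} [AddCommMonoid M] {g : α → M}
    (hg : Periodic g 1) (x : α) : shiftSum g x = 3 • g x := by
  have h2 : g (x + 2) = g x := by rw [← one_add_one_eq_two, ← add_assoc, hg, hg]
  rw [shiftSum, h2, hg, succ_nsmul, two_nsmul]

theorem Function.Periodic.shiftSum_periodic {M : Type*} [AddCommMonoid M] {f : α → M}
    (hf : Periodic f 3) : Periodic (shiftSum f) 1 := by
  intro x
  have h3 : f (x + 1 + 2) = f x := by
    rw [add_assoc, ← one_add_one_eq_two, ← add_assoc 1, one_add_one_eq_two, two_add_one_eq_three,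
      hf]
  rw [shiftSum, shiftSum, h3, add_assoc x 1 1, one_add_one_eq_two]
  abel

variable {K : Type*} [DivisionRing K] [NeZero (3 : K)]

theorem Function.Periodic.shiftSum_sub_div_three {f : α → K} (hf : Periodic f 3) :
    shiftSum (f - fun x => shiftSum f x / 3) = 0 := by
  have hg : Periodic (fun x => shiftSum f x / 3) 1 := hf.shiftSum_periodic.comp (· / 3)
  funext x
  rw [shiftSum_sub, Pi.sub_apply, hg.shiftSum_eq_nsmul, nsmul_eq_mul', Nat.cast_ofNat,
    div_mul_cancel₀ _ three_ne_zero, sub_self, Pi.zero_apply]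

theorem Function.Periodic.eq_shiftSum_div_three {f g h : α → K} (hg : Periodic g 1)
    (hh : shiftSum h = 0) (hfgh : f = g + h) : g = fun x => shiftSum f x / 3 := by
  funext x
  rw [hfgh, shiftSum_add, hh, add_zero, hg.shiftSum_eq_nsmul, nsmul_eq_mul', Nat.cast_ofNat,
    mul_div_cancel_right₀ _ three_ne_zero]

end ShiftSum

theorem three_periodic_decomp (f : ℝ → ℝ)
    (hf : ∀ x : ℝ, f (x + 3) = f x) :
    (∀ x : ℝ, (fun x => (f x + f (x + 1) + f (x + 2)) / 3) (x + 1) =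
      (fun x => (f x + f (x + 1) + f (x + 2)) / 3) x) ∧
    (∀ x : ℝ, (f (x + 2) - (f (x + 2) + f (x + 3) + f (x + 4)) / 3) +
      (f (x + 1) - (f (x + 1) + f (x + 2) + f (x + 3)) / 3) +
      (f x - (f x + f (x + 1) + f (x + 2)) / 3) = 0) ∧
    (∀ x : ℝ, f x = (f x + f (x + 1) + f (x + 2)) / 3 +
      (f x - (f x + f (x + 1) + f (x + 2)) / 3)) ∧
    (∀ g₁ h₁ g₂ h₂ : ℝ → ℝ,
      (∀ x, g₁ (x + 1) = g₁ x) → (∀ x, h₁ (x + 2) + h₁ (x + 1) + h₁ x = 0) →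
      (∀ x, g₂ (x + 1) = g₂ x) → (∀ x, h₂ (x + 2) + h₂ (x + 1) + h₂ x = 0) →
      (∀ x, f x = g₁ x + h₁ x) → (∀ x, f x = g₂ x + h₂ x) →
      g₁ = g₂ ∧ h₁ = h₂) := by
  have hf : Periodic f 3 := hf
  have hg : (fun x => (f x + f (x + 1) + f (x + 2)) / 3) = fun x => shiftSum f x / 3 := by
    funext x
    rw [shiftSum]
    ring
  refine ⟨?_, fun x => ?_, fun x => by ring, ?_⟩
  · exact hg ▸ hf.shiftSum_periodic.comp (· / 3)
  · have hh := congrFun hf.shiftSum_sub_div_three x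
    simp only [shiftSum, Pi.sub_apply, Pi.zero_apply] at hh
    ring_nf at hh ⊢
    exact hh
  · intro g₁ h₁ g₂ h₂ hg₁ hh₁ hg₂ hh₂ hf₁ hf₂
    have e₁ := Periodic.eq_shiftSum_div_three hg₁ (funext hh₁) (funext hf₁)
    have e₂ := Periodic.eq_shiftSum_div_three hg₂ (funext hh₂) (funext hf₂)
    obtain rfl : g₁ = g₂ := e₁.trans e₂.symm
    exact ⟨rfl, funext fun x => add_left_cancel ((hf₁ x).symm.trans (hf₂ x))⟩
end

section
/- Let S = {f : ℝ → ℝ | f(x+2) + f(x+1) + f(x) = 0 for all x}. Then the image of S under the forward difference operator Δ (where Δf(x) = f(x+1) - f(x)) equals S; that is, for every s ∈ S there exists f ∈ S with Δf = s, and Δf ∈ S whenever f ∈ S. -/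
/-!
Writing `E` for the shift `f ↦ f (· + 1)`, the set `S` is the kernel of `E² + E + 1`, and
`Δ = E - 1`. Since `Δ` commutes with `E`, it maps this kernel into itself; and on the kernel
`(E - 1) ∘ (-(E + 2) / 3) = 1 - (E² + E + 1) / 3 = 1`, so every `s ∈ S` is `Δ` of
`-(s (· + 1) + 2 s) / 3 ∈ S`.
-/

open fwdDiff

section ShiftSumKernel

variable (R K : Type*) [AddCommMonoidWithOne R] [Field K]

def shiftSumKernel : Submodule K (R → K) where
  carrier := {f | ∀ x, f (x + 2) + f (x + 1) + f x = 0}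
  add_mem' {f g} hf hg x := by
    simp only [Pi.add_apply]
    linear_combination hf x + hg x
  zero_mem' _ := by simp
  smul_mem' c f hf x := by
    simp only [Pi.smul_apply, smul_eq_mul]
    linear_combination c * hf x

variable {R K} {f : R → K}

theorem comp_add_one_mem_shiftSumKernel (hf : f ∈ shiftSumKernel R K) :
    (fun x => f (x + 1)) ∈ shiftSumKernel R K := fun x => by
  simpa only [add_right_comm x 1 2] using hf (x + 1)

theorem fwdDiff_mem_shiftSumKernel (hf : f ∈ shiftSumKernel R K) :
    Δ_[1] f ∈ shiftSumKernel R K :=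
  sub_mem (comp_add_one_mem_shiftSumKernel hf) hf

theorem exists_mem_shiftSumKernel_fwdDiff_eq [NeZero (3 : K)] {s : R → K}
    (hs : s ∈ shiftSumKernel R K) : ∃ f ∈ shiftSumKernel R K, Δ_[1] f = s := by
  refine ⟨(-3⁻¹ : K) • ((fun x => s (x + 1)) + (2 : K) • s), ?_, ?_⟩
  · exact Submodule.smul_mem _ _ <|
      add_mem (comp_add_one_mem_shiftSumKernel hs) (Submodule.smul_mem _ _ hs)
  · funext x
    have hx := hs x
    simp only [fwdDiff, Pi.smul_apply, Pi.add_apply, smul_eq_mul, add_assoc,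
      one_add_one_eq_two] at hx ⊢
    field_simp
    linear_combination -hx

theorem image_fwdDiff_shiftSumKernel [NeZero (3 : K)] :
    Δ_[1] '' (shiftSumKernel R K : Set (R → K)) = shiftSumKernel R K :=
  (Set.image_subset_iff.2 fun _ => fwdDiff_mem_shiftSumKernel).antisymm
    fun _ hs => exists_mem_shiftSumKernel_fwdDiff_eq hs

end ShiftSumKernel

theorem delta_image_of_S (S : Set (ℝ → ℝ))
    (hS : S = {f : ℝ → ℝ | ∀ x : ℝ, f (x + 2) + f (x + 1) + f x = 0}) :
    (fun f : ℝ → ℝ => fun x => f (x + 1) - f x) '' S = S := by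
  subst hS
  exact image_fwdDiff_shiftSumKernel
end

section
/- Every 3-antiperiodic function f : ℝ → ℝ can be written uniquely as f = g + h, where g is 1-antiperiodic and h satisfies h(x+2) - h(x+1) + h(x) = 0 for all x. -/
/-!
Write `T` for the shift `x ↦ x + 1`. Then `f` is 3-antiperiodic iff `(T³ + 1) f = 0`, and
`T³ + 1 = (T + 1)(T² - T + 1)`, whose factors satisfy `(T² - T + 1) - (T - 2)(T + 1) = 3`.
On 1-antiperiodic functions (the kernel of `T + 1`) the operator `T² - T + 1` therefore acts as
multiplication by `3`, so in any decomposition `f = g + h` the antiperiodic part is forced to be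
`g = (T² - T + 1) f / 3`; conversely this `g` is 1-antiperiodic because `T + 1` kills it.
-/

open Function

section ShiftTrinomial

variable {α K : Type*}

def shiftTrinomial [Add α] [Ring K] (f : α → K) (c : α) (x : α) : K :=
  f (x + c + c) - f (x + c) + f x

theorem shiftTrinomial_add [Add α] [Ring K] {f g h : α → K} (hfgh : ∀ x, f x = g x + h x)
    (c x : α) : shiftTrinomial f c x = shiftTrinomial g c x + shiftTrinomial h c x := by
  simp only [shiftTrinomial, hfgh]
  abel

theorem Function.Antiperiodic.shiftTrinomial_eq [Add α] [Ring K] {g : α → K} {c : α}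
    (hg : Antiperiodic g c) (x : α) : shiftTrinomial g c x = 3 * g x := by
  rw [shiftTrinomial, hg, hg]
  noncomm_ring

theorem antiperiodic_shiftTrinomial [AddSemigroup α] [Ring K] {f : α → K} {c : α}
    (hf : Antiperiodic f (c + c + c)) : Antiperiodic (shiftTrinomial f c) c := by
  intro x
  have hx : f (x + c + c + c) = -f x := by simpa only [add_assoc] using hf x
  rw [shiftTrinomial, shiftTrinomial, hx]
  abel

theorem shiftTrinomial_one [AddMonoidWithOne α] [Ring K] (h : α → K) (x : α) :
    shiftTrinomial h 1 x = h (x + 2) - h (x + 1) + h x := by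
  rw [shiftTrinomial, add_assoc x 1 1, one_add_one_eq_two]

end ShiftTrinomial

section AntiperiodicPart

variable {α K : Type*} [Field K]

def antiperiodicPart [Add α] (f : α → K) (c : α) (x : α) : K :=
  shiftTrinomial f c x / 3

theorem antiperiodic_antiperiodicPart [AddSemigroup α] {f : α → K} {c : α}
    (hf : Antiperiodic f (c + c + c)) : Antiperiodic (antiperiodicPart f c) c := by
  intro x
  rw [antiperiodicPart, antiperiodicPart, antiperiodic_shiftTrinomial hf, neg_div]

theorem shiftTrinomial_sub_antiperiodicPart [AddSemigroup α] (h3 : (3 : K) ≠ 0) {f : α → K}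
    {c : α} (hf : Antiperiodic f (c + c + c)) (x : α) :
    shiftTrinomial (fun y => f y - antiperiodicPart f c y) c x = 0 := by
  have hsplit :=
    shiftTrinomial_add (fun y => (sub_add_cancel (f y) (antiperiodicPart f c y)).symm) c x
  rw [(antiperiodic_antiperiodicPart hf).shiftTrinomial_eq, antiperiodicPart,
    mul_div_cancel₀ _ h3] at hsplit
  linear_combination -hsplit

theorem eq_antiperiodicPart_of_eq_add [Add α] (h3 : (3 : K) ≠ 0) {f g h : α → K} {c : α}
    (hg : Antiperiodic g c) (hh : ∀ x, shiftTrinomial h c x = 0) (hfgh : ∀ x, f x = g x + h x) :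
    g = antiperiodicPart f c := by
  funext x
  rw [antiperiodicPart, shiftTrinomial_add hfgh, hg.shiftTrinomial_eq, hh, add_zero,
    mul_div_cancel_left₀ _ h3]

end AntiperiodicPart

theorem three_antiperiodic_decomp (f : ℝ → ℝ)
    (hf : ∀ x : ℝ, f (x + 3) = -f x) :
    ∃ g h : ℝ → ℝ,
      (∀ x : ℝ, g (x + 1) = -g x) ∧
      (∀ x : ℝ, h (x + 2) - h (x + 1) + h x = 0) ∧
      (∀ x : ℝ, f x = g x + h x) ∧
      (∀ g' h' : ℝ → ℝ, (∀ x, g' (x + 1) = -g' x) →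
        (∀ x, h' (x + 2) - h' (x + 1) + h' x = 0) →
        (∀ x, f x = g' x + h' x) → g' = g ∧ h' = h) := by
  have h3 : (3 : ℝ) ≠ 0 := three_ne_zero
  have hf' : Antiperiodic f (1 + 1 + 1) := by
    rw [show (1 + 1 + 1 : ℝ) = 3 by norm_num]
    exact hf
  refine ⟨antiperiodicPart f 1, fun x => f x - antiperiodicPart f 1 x,
    antiperiodic_antiperiodicPart hf', fun x => ?_, fun x => (add_sub_cancel _ _).symm, ?_⟩
  · exact (shiftTrinomial_one _ x).symm.trans (shiftTrinomial_sub_antiperiodicPart h3 hf' x)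
  · intro g' h' hg' hh' hfgh
    have hg'_eq : g' = antiperiodicPart f 1 :=
      eq_antiperiodicPart_of_eq_add h3 hg' (fun x => (shiftTrinomial_one h' x).trans (hh' x)) hfgh
    refine ⟨hg'_eq, funext fun x => ?_⟩
    rw [hfgh x, hg'_eq, add_sub_cancel_left]
end
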